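/- Let μ be a positive Borel measure on ℝ and let f be a nonnegative μ-measurable function on ℝ such that μ({x : f(x) > t}) < ∞ for every t > 0. Then for every λ > 0, μ({x ∈ ℝ : M_μ f(x) > λ}) ≤ Leb({x ∈ ℝ : M(f*)(x) > λ}), where Leb denotes Lebesgue measure on ℝ. -/

import Mathlib

open MeasureTheory Set ENNReal

/-- Symmetric decreasing rearrangement (w.r.t. the measure `μ`) of an
`ℝ≥0∞`-valued function `g` on `ℝ`:  `g*(x) = inf {t > 0 | μ {g > t} ≤ 2|x|}`. -/
noncomputable def rearrE (μ : Measure ℝ) (g : ℝ → ℝ≥0∞) (x : ℝ) : ℝ≥0∞ :=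
  sInf {t : ℝ≥0∞ | 0 < t ∧ μ {y | t < g y} ≤ ENNReal.ofReal (2 * |x|)}

/-- Symmetric decreasing rearrangement (w.r.t. `μ`) of a real-valued function:
`f*(x) = inf {t > 0 | μ {|f| > t} ≤ 2|x|}`. -/
noncomputable def rearr (μ : Measure ℝ) (f : ℝ → ℝ) (x : ℝ) : ℝ≥0∞ :=
  rearrE μ (fun y => ENNReal.ofReal |f y|) x

/-- Uncentered Hardy-Littlewood maximal function w.r.t. `μ` of an
`ℝ≥0∞`-valued function: the sup of averages over open intervals containing `x`
of positive `μ`-measure. -/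
noncomputable def maximalE (μ : Measure ℝ) (g : ℝ → ℝ≥0∞) (x : ℝ) : ℝ≥0∞ :=
  ⨆ (a : ℝ) (b : ℝ) (_ : x ∈ Ioo a b) (_ : 0 < μ (Ioo a b)),
    (μ (Ioo a b))⁻¹ * ∫⁻ y in Ioo a b, g y ∂μ

/-- Uncentered Hardy-Littlewood maximal function `M_μ f` of a real-valued `f`. -/
noncomputable def maximal (μ : Measure ℝ) (f : ℝ → ℝ) (x : ℝ) : ℝ≥0∞ :=
  maximalE μ (fun y => ENNReal.ofReal |f y|) x

/-- Weak `L^p` quasinorm w.r.t. `μ` of an `ℝ≥0∞`-valued function: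
`sup_{t>0} t · μ({g > t})^(1/p)`. -/
noncomputable def wnormE (μ : Measure ℝ) (g : ℝ → ℝ≥0∞) (p : ℝ) : ℝ≥0∞ :=
  ⨆ (t : ℝ) (_ : 0 < t), ENNReal.ofReal t * μ {x | ENNReal.ofReal t < g x} ^ (1 / p)

/-- Weak `L^p` quasinorm `‖f‖_{L^{p,∞}(ℝ,dμ)} = sup_{t>0} t · μ({|f| > t})^(1/p)`. -/
noncomputable def wnorm' (μ : Measure ℝ) (f : ℝ → ℝ) (p : ℝ) : ℝ≥0∞ :=
  wnormE μ (fun x => ENNReal.ofReal |f x|) p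

/-- `f` is distributionally symmetric: for every `t > 0` the sets
`{x > 0 | f x > t}` and `{x < 0 | f x > t}` have the same Lebesgue measure. -/
def DistribSymm (f : ℝ → ℝ) : Prop :=
  ∀ t : ℝ, 0 < t → volume {x | 0 < x ∧ t < f x} = volume {x | x < 0 ∧ t < f x}

/-!
Every point of `{M_μ g > L}` lies in an open interval `I` with `L μ(I) < ∫_I g dμ`. By
Lindelöf and continuity from below it suffices to bound the measure of the union `T₁` of finitely
many such intervals, and these can be thinned out so that no point lies in three of them. With
`T₂` the set of points covered twice, `L (μ T₁ + μ T₂) < ∫_{T₁} g + ∫_{T₂} g`, and the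
Hardy–Littlewood inequality `∫_A g dμ ≤ ∫_{|x| < μ(A)/2} g*` bounds the right side by
`2 ∫_0^{r₁} g* + 2 ∫_0^{r₂} g*`, where `rᵢ = μ(Tᵢ)/2`. As `g*` is even, the intervals
`(-r₁, r₂)` and `(-r₂, r₁)` therefore both have `g*`-average larger than `L`, and together they
cover `(-r₁, r₁)` up to one point, a set of Lebesgue measure `μ T₁`.
-/
lemma volume_setOf_pos_ofReal_lt (c : ℝ≥0∞) :
    volume {t : ℝ | 0 < t ∧ ENNReal.ofReal t < c} = c := by
  rcases eq_or_ne c ⊤ with rfl | hc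
  · have : {t : ℝ | 0 < t ∧ ENNReal.ofReal t < ⊤} = Ioi 0 := by ext; simp
    rw [this, Real.volume_Ioi]
  · have : {t : ℝ | 0 < t ∧ ENNReal.ofReal t < c} = Ioo 0 c.toReal := by
      ext t
      simp only [mem_ofPred_eq, mem_Ioo, and_congr_right_iff]
      exact fun ht => ofReal_lt_iff_lt_toReal ht.le hc
    rw [this, Real.volume_Ioo, sub_zero, ofReal_toReal hc]

lemma volume_setOf_ofReal_two_mul_abs_lt (c : ℝ≥0∞) :
    volume {x : ℝ | ENNReal.ofReal (2 * |x|) < c} = c := by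
  rcases eq_or_ne c ⊤ with rfl | hc
  · have : {x : ℝ | ENNReal.ofReal (2 * |x|) < ⊤} = univ := by
      ext; simp [mul_lt_top]
    rw [this, Real.volume_univ]
  · have : {x : ℝ | ENNReal.ofReal (2 * |x|) < c} = Ioo (-(c.toReal / 2)) (c.toReal / 2) := by
      ext x
      rw [mem_ofPred_eq, ofReal_lt_iff_lt_toReal (by positivity) hc, mem_Ioo, ← abs_lt]
      constructor <;> intro <;> linarith
    rw [this, Real.volume_Ioo, show c.toReal / 2 - -(c.toReal / 2) = c.toReal by ring,
      ofReal_toReal hc]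

theorem lintegral_eq_lintegral_meas_ofReal_lt {α : Type*} [MeasurableSpace α] (ν : Measure α)
    [SFinite ν] {g : α → ℝ≥0∞} (hg : Measurable g) :
    ∫⁻ x, g x ∂ν = ∫⁻ t in Ioi 0, ν {x | ENNReal.ofReal t < g x} := by
  have hS : MeasurableSet {p : α × ℝ | ENNReal.ofReal p.2 < g p.1} :=
    measurableSet_lt (by fun_prop) (hg.comp measurable_fst)
  calc ∫⁻ x, g x ∂ν = ∫⁻ x, volume.restrict (Ioi 0) {t : ℝ | ENNReal.ofReal t < g x} ∂ν := by
        refine lintegral_congr fun x => ?_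
        rw [Measure.restrict_apply' measurableSet_Ioi, inter_comm]
        exact (volume_setOf_pos_ofReal_lt (g x)).symm
    _ = ν.prod (volume.restrict (Ioi 0)) {p : α × ℝ | ENNReal.ofReal p.2 < g p.1} :=
        (Measure.prod_apply hS).symm
    _ = _ := Measure.prod_apply_symm hS

lemma setLIntegral_Ioo_neg_of_even {h : ℝ → ℝ≥0∞} (hh : ∀ x, h (-x) = h x) {a b : ℝ}
    (ha : 0 ≤ a) (hb : 0 ≤ b) :
    ∫⁻ x in Ioo (-a) b, h x = (∫⁻ x in Ioo 0 a, h x) + ∫⁻ x in Ioo 0 b, h x := by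
  have hreflect : ∫⁻ x in Ioo (-a) 0, h x = ∫⁻ x in Ioo 0 a, h x := by
    have := (Measure.measurePreserving_neg (volume : Measure ℝ)).setLIntegral_comp_preimage_emb
      (MeasurableEquiv.neg ℝ).measurableEmbedding h (Ioo 0 a)
    simpa [hh, neg_Ioo] using this
  have hsplit : Ioo (-a) 0 ∪ Ioo 0 b = Ioo (-a) b \ {0} := by
    ext x
    simp only [mem_union, mem_Ioo, mem_sdiff, mem_singleton_iff]
    constructor
    · rintro (h | h)
      · exact ⟨⟨h.1, h.2.trans_le hb⟩, h.2.ne⟩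
      · exact ⟨⟨by linarith [h.1], h.2⟩, h.1.ne'⟩
    · rintro ⟨h, hx⟩
      rcases lt_or_gt_of_ne hx with hx | hx
      · exact .inl ⟨h.1, hx⟩
      · exact .inr ⟨hx, h.2⟩
  have hdisj : Disjoint (Ioo (-a) 0) (Ioo 0 b) :=
    Set.disjoint_left.2 fun x h₁ h₂ => lt_asymm h₁.2 h₂.1
  rw [← setLIntegral_congr (sdiff_null_ae_eq_self (measure_singleton 0)), ← hsplit,
    lintegral_union measurableSet_Ioo hdisj, hreflect]

lemma measure_iUnion_le_of_forall_finset {α ι : Type*} [TopologicalSpace α]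
    [SecondCountableTopology α] [MeasurableSpace α] {μ : Measure α} {U : ι → Set α}
    (hU : ∀ i, IsOpen (U i)) {c : ℝ≥0∞} (h : ∀ s : Finset ι, μ (⋃ i ∈ s, U i) ≤ c) :
    μ (⋃ i, U i) ≤ c := by
  obtain ⟨T, hTc, hT⟩ := TopologicalSpace.isOpen_iUnion_countable U hU
  have := hTc.to_subtype
  have hdir : Directed (· ⊆ ·) fun s : Finset T => ⋃ i ∈ s, U i :=
    Monotone.directed_le fun s₁ s₂ hs => biUnion_subset_biUnion_left hs
  rw [← hT, biUnion_eq_iUnion, iUnion_eq_iUnion_finset, hdir.measure_iUnion]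
  refine iSup_le fun s => le_of_eq_of_le ?_ (h (s.map (Function.Embedding.subtype _)))
  simp

lemma Ioo_subset_Ioo_union_Ioo_of_mem {a₁ b₁ a₂ b₂ a b x : ℝ} (h₁ : x ∈ Ioo a₁ b₁)
    (h₂ : x ∈ Ioo a₂ b₂) (ha : a₁ ≤ a) (hb : b ≤ b₂) : Ioo a b ⊆ Ioo a₁ b₁ ∪ Ioo a₂ b₂ := by
  intro y hy
  rcases lt_or_ge y b₁ with h | h
  · exact .inl ⟨ha.trans_lt hy.1, h⟩
  · exact .inr ⟨h₂.1.trans (h₁.2.trans_le h), hy.2.trans_le hb⟩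

lemma Ioo_subset_union_of_mem_of_mem_of_mem {a₁ b₁ a₂ b₂ a₃ b₃ x : ℝ} (h₁ : x ∈ Ioo a₁ b₁)
    (h₂ : x ∈ Ioo a₂ b₂) (h₃ : x ∈ Ioo a₃ b₃) :
    Ioo a₁ b₁ ⊆ Ioo a₂ b₂ ∪ Ioo a₃ b₃ ∨ Ioo a₂ b₂ ⊆ Ioo a₁ b₁ ∪ Ioo a₃ b₃ ∨
      Ioo a₃ b₃ ⊆ Ioo a₁ b₁ ∪ Ioo a₂ b₂ := by
  -- If `Iᵢ` has the leftmost left end and `Iⱼ` the rightmost right end, any other of the three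
  -- lies in `Iᵢ ∪ Iⱼ`.
  rcases le_total a₁ a₂ with h12 | h12 <;> rcases le_total a₁ a₃ with h13 | h13 <;>
    rcases le_total a₂ a₃ with h23 | h23 <;> rcases le_total b₁ b₂ with g12 | g12 <;>
    rcases le_total b₁ b₃ with g13 | g13 <;> rcases le_total b₂ b₃ with g23 | g23 <;>
  first
  | exact .inl (Ioo_subset_Ioo_union_Ioo_of_mem h₂ h₃ (by linarith) (by linarith))
  | exact .inl (union_comm _ _ ▸
      Ioo_subset_Ioo_union_Ioo_of_mem h₃ h₂ (by linarith) (by linarith))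
  | exact .inr (.inl (Ioo_subset_Ioo_union_Ioo_of_mem h₁ h₃ (by linarith) (by linarith)))
  | exact .inr (.inl (union_comm _ _ ▸
      Ioo_subset_Ioo_union_Ioo_of_mem h₃ h₁ (by linarith) (by linarith)))
  | exact .inr (.inr (Ioo_subset_Ioo_union_Ioo_of_mem h₁ h₂ (by linarith) (by linarith)))
  | exact .inr (.inr (union_comm _ _ ▸
      Ioo_subset_Ioo_union_Ioo_of_mem h₂ h₁ (by linarith) (by linarith)))

section Covering

variable {ι : Type*} [DecidableEq ι]

lemma exists_biUnion_erase_eq_of_two_lt_card {a b : ι → ℝ} {s : Finset ι} {x : ℝ}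
    (hx : 2 < (s.filter fun k => x ∈ Ioo (a k) (b k)).card) :
    ∃ r ∈ s, ⋃ k ∈ s.erase r, Ioo (a k) (b k) = ⋃ k ∈ s, Ioo (a k) (b k) := by
  have of_subset : ∀ r ∈ s, ∀ p ∈ s, ∀ q ∈ s, p ≠ r → q ≠ r →
      Ioo (a r) (b r) ⊆ Ioo (a p) (b p) ∪ Ioo (a q) (b q) →
      ∃ r ∈ s, ⋃ k ∈ s.erase r, Ioo (a k) (b k) = ⋃ k ∈ s, Ioo (a k) (b k) := by
    intro r hr p hp q hq hpr hqr hsub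
    refine ⟨r, hr, ?_⟩
    conv_rhs => rw [← Finset.insert_erase hr, Finset.set_biUnion_insert]
    refine (union_eq_right.2 (hsub.trans (union_subset ?_ ?_))).symm <;>
      exact Finset.subset_set_biUnion_of_mem (f := fun k => Ioo (a k) (b k))
        (Finset.mem_erase.2 ⟨‹_›, ‹_›⟩)
  obtain ⟨k, hk, l, hl, m, hm, hkl, hkm, hlm⟩ := Finset.two_lt_card.1 hx
  rw [Finset.mem_filter] at hk hl hm
  rcases Ioo_subset_union_of_mem_of_mem_of_mem hk.2 hl.2 hm.2 with h | h | h
  · exact of_subset k hk.1 l hl.1 m hm.1 hkl.symm hkm.symm h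
  · exact of_subset l hl.1 k hk.1 m hm.1 hkl hlm.symm h
  · exact of_subset m hm.1 k hk.1 l hl.1 hkm hlm h

lemma exists_subset_biUnion_eq_card_le_two (a b : ι → ℝ) (s : Finset ι) :
    ∃ t ⊆ s, ⋃ k ∈ t, Ioo (a k) (b k) = ⋃ k ∈ s, Ioo (a k) (b k) ∧
      ∀ x, (t.filter fun k => x ∈ Ioo (a k) (b k)).card ≤ 2 := by
  induction s using Finset.strongInduction with
  | _ s ih =>
    by_cases hs : ∀ x, (s.filter fun k => x ∈ Ioo (a k) (b k)).card ≤ 2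
    · exact ⟨s, subset_rfl, rfl, hs⟩
    simp only [not_forall, not_le] at hs
    obtain ⟨x, hx⟩ := hs
    obtain ⟨r, hr, herase⟩ := exists_biUnion_erase_eq_of_two_lt_card hx
    obtain ⟨t, hts, htU, ht⟩ := ih _ (Finset.erase_ssubset hr)
    exact ⟨t, hts.trans (Finset.erase_subset r s), htU.trans herase, ht⟩

variable {α : Type*}

def doublyCovered (t : Finset ι) (I : ι → Set α) : Set α :=
  ⋃ k ∈ t, ⋃ l ∈ t.erase k, I k ∩ I l

lemma mem_doublyCovered_iff {t : Finset ι} {I : ι → Set α} [∀ x k, Decidable (x ∈ I k)]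
    {x : α} : x ∈ doublyCovered t I ↔ 2 ≤ (t.filter fun k => x ∈ I k).card := by
  show _ ↔ 1 < _
  simp only [doublyCovered, mem_iUnion, mem_inter_iff, exists_prop, Finset.mem_erase,
    Finset.one_lt_card, Finset.mem_filter]
  constructor
  · rintro ⟨k, hk, l, ⟨hlk, hl⟩, hxk, hxl⟩
    exact ⟨k, ⟨hk, hxk⟩, l, ⟨hl, hxl⟩, hlk.symm⟩
  · rintro ⟨k, ⟨hk, hxk⟩, l, ⟨hl, hxl⟩, hkl⟩
    exact ⟨k, hk, l, ⟨hkl.symm, hl⟩, hxk, hxl⟩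

lemma doublyCovered_subset (t : Finset ι) (I : ι → Set α) :
    doublyCovered t I ⊆ ⋃ k ∈ t, I k :=
  iUnion₂_mono fun _ _ => iUnion₂_subset fun _ _ => inter_subset_left

lemma measurableSet_doublyCovered [MeasurableSpace α] (t : Finset ι) {I : ι → Set α}
    (hI : ∀ k, MeasurableSet (I k)) : MeasurableSet (doublyCovered t I) :=
  t.measurableSet_biUnion fun k _ =>
    (t.erase k).measurableSet_biUnion fun l _ => (hI k).inter (hI l)

lemma sum_setLIntegral_eq_of_card_le_two [MeasurableSpace α] (μ : Measure α) {t : Finset ι}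
    {I : ι → Set α} [∀ x k, Decidable (x ∈ I k)] (hI : ∀ k, MeasurableSet (I k))
    (ht : ∀ x, (t.filter fun k => x ∈ I k).card ≤ 2) {h : α → ℝ≥0∞} (hh : Measurable h) :
    ∑ k ∈ t, ∫⁻ y in I k, h y ∂μ =
      (∫⁻ y in ⋃ k ∈ t, I k, h y ∂μ) + ∫⁻ y in doublyCovered t I, h y ∂μ := by
  simp_rw [← lintegral_indicator (hI _)]
  rw [← lintegral_finsetSum _ fun k _ => hh.indicator (hI k),
    ← lintegral_indicator (t.measurableSet_biUnion fun k _ => hI k),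
    ← lintegral_indicator (measurableSet_doublyCovered t hI),
    ← lintegral_add_left (hh.indicator (t.measurableSet_biUnion fun k _ => hI k))]
  refine lintegral_congr fun y => ?_
  classical
  rw [Finset.sum_indicator_eq_sum_filter, Finset.sum_const, nsmul_eq_mul]
  have hU : y ∈ ⋃ k ∈ t, I k ↔ 1 ≤ (t.filter fun k => y ∈ I k).card := by
    simp [Finset.one_le_card, Finset.filter_nonempty_iff]
  have h2 := ht y
  rw [indicator_apply, indicator_apply, hU, mem_doublyCovered_iff]
  interval_cases (t.filter fun k => y ∈ I k).card <;> simp [two_mul]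

lemma mul_add_lt_of_card_le_two [MeasurableSpace α] {μ : Measure α} {t : Finset ι}
    {I : ι → Set α} [∀ x k, Decidable (x ∈ I k)] (hI : ∀ k, MeasurableSet (I k))
    (ht : ∀ x, (t.filter fun k => x ∈ I k).card ≤ 2) (hne : t.Nonempty) {h : α → ℝ≥0∞}
    (hh : Measurable h) {L : ℝ≥0∞} (hgood : ∀ k ∈ t, L * μ (I k) < ∫⁻ y in I k, h y ∂μ) :
    L * (μ (⋃ k ∈ t, I k) + μ (doublyCovered t I)) <
      (∫⁻ y in ⋃ k ∈ t, I k, h y ∂μ) + ∫⁻ y in doublyCovered t I, h y ∂μ :=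
  calc L * (μ (⋃ k ∈ t, I k) + μ (doublyCovered t I)) = ∑ k ∈ t, L * μ (I k) := by
        simpa [Finset.mul_sum] using congrArg (L * ·)
          (sum_setLIntegral_eq_of_card_le_two μ hI ht measurable_const (h := 1)).symm
    _ < ∑ k ∈ t, ∫⁻ y in I k, h y ∂μ := ENNReal.sum_lt_sum_of_nonempty hne hgood
    _ = _ := sum_setLIntegral_eq_of_card_le_two μ hI ht hh

end Covering

section Rearrangement

variable {μ : Measure ℝ} {g : ℝ → ℝ≥0∞}

lemma rearrE_neg (x : ℝ) : rearrE μ g (-x) = rearrE μ g x := by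
  simp only [rearrE, abs_neg]

lemma measurable_rearrE : Measurable (rearrE μ g) := by
  have hanti : Antitone fun u : ℝ =>
      sInf {t : ℝ≥0∞ | 0 < t ∧ μ {y | t < g y} ≤ ENNReal.ofReal (2 * u)} :=
    fun u v huv => sInf_le_sInf fun t ht =>
      ⟨ht.1, ht.2.trans (ofReal_le_ofReal (by linarith))⟩
  exact hanti.measurable.comp measurable_abs

lemma measure_lt_eq_iSup_add_inv {t : ℝ≥0∞} (ht : t ≠ ⊤) :
    μ {y | t < g y} = ⨆ n : ℕ, μ {y | t + (n : ℝ≥0∞)⁻¹ < g y} := by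
  have hU : {y | t < g y} = ⋃ n : ℕ, {y | t + (n : ℝ≥0∞)⁻¹ < g y} := by
    ext y
    simp only [mem_ofPred_eq, mem_iUnion]
    constructor
    · intro hy
      obtain ⟨n, hn⟩ := exists_inv_nat_lt (tsub_pos_of_lt hy).ne'
      exact ⟨n, by simpa [add_tsub_cancel_of_le hy.le] using (ENNReal.add_lt_add_left ht hn)⟩
    · rintro ⟨n, hn⟩
      exact (le_self_add).trans_lt hn
  rw [hU]
  refine Monotone.measure_iUnion fun n m hnm => ofPred_subset_ofPred.2 fun y hy => ?_
  calc t + (m : ℝ≥0∞)⁻¹ ≤ t + (n : ℝ≥0∞)⁻¹ := by gcongr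
    _ < g y := hy

lemma lt_rearrE_of_lt_measure {t : ℝ≥0∞} {x : ℝ}
    (hx : ENNReal.ofReal (2 * |x|) < μ {y | t < g y}) : t < rearrE μ g x := by
  rcases eq_or_ne t ⊤ with rfl | ht
  · simp at hx
  rw [measure_lt_eq_iSup_add_inv ht, lt_iSup_iff] at hx
  obtain ⟨n, hn⟩ := hx
  refine (lt_add_right ht (ENNReal.inv_ne_zero.2 (natCast_ne_top n))).trans_le
    (le_sInf fun s hs => ?_)
  by_contra! hlt
  exact (hs.2.trans_lt hn).not_ge (measure_mono fun y hy => hlt.trans hy)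

theorem setLIntegral_le_lintegral_rearrE (hg : Measurable g) {A : Set ℝ} (hA : μ A ≠ ⊤) :
    ∫⁻ y in A, g y ∂μ ≤
      ∫⁻ x in Ioo (-((μ A).toReal / 2)) ((μ A).toReal / 2), rearrE μ g x := by
  have : IsFiniteMeasure (μ.restrict A) := isFiniteMeasure_restrict.2 hA
  rw [lintegral_eq_lintegral_meas_ofReal_lt _ hg,
    lintegral_eq_lintegral_meas_ofReal_lt _ measurable_rearrE]
  refine lintegral_mono fun t => ?_
  set c := min (μ A) (μ {y | ENNReal.ofReal t < g y})
  calc μ.restrict A {y | ENNReal.ofReal t < g y} ≤ c := by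
        rw [Measure.restrict_apply (measurableSet_lt measurable_const hg)]
        exact le_min (measure_mono inter_subset_right) (measure_mono inter_subset_left)
    _ = volume {x : ℝ | ENNReal.ofReal (2 * |x|) < c} :=
        (volume_setOf_ofReal_two_mul_abs_lt c).symm
    _ ≤ _ := by
        rw [Measure.restrict_apply (measurableSet_lt measurable_const measurable_rearrE)]
        refine measure_mono fun x (hx : ENNReal.ofReal (2 * |x|) < c) =>
          ⟨lt_rearrE_of_lt_measure (lt_min_iff.1 hx).2, ?_⟩
        have := (lt_min_iff.1 hx).1
        rw [mem_Ioo, ← abs_lt]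
        rw [ofReal_lt_iff_lt_toReal (by positivity) hA] at this
        linarith

end Rearrangement

lemma lt_maximalE_iff {μ : Measure ℝ} {h : ℝ → ℝ≥0∞} {L : ℝ≥0∞} (hL : 0 < L) {x : ℝ} :
    L < maximalE μ h x ↔
      ∃ a b, x ∈ Ioo a b ∧ L * μ (Ioo a b) < ∫⁻ y in Ioo a b, h y ∂μ := by
  simp only [maximalE, lt_iSup_iff, exists_prop, ← ENNReal.div_eq_inv_mul]
  refine exists₂_congr fun a b => and_congr_right fun _ => ⟨fun ⟨hpos, hlt⟩ => ?_, fun hlt => ?_⟩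
  · have hfin : μ (Ioo a b) ≠ ⊤ := fun htop => by simp [htop] at hlt
    exact (ENNReal.lt_div_iff_mul_lt (.inl hpos.ne') (.inl hfin)).1 hlt
  · have hpos : μ (Ioo a b) ≠ 0 := fun h0 => by simp [Measure.restrict_eq_zero.2 h0] at hlt
    have hfin : μ (Ioo a b) ≠ ⊤ := fun htop => by simp [htop, hL.ne'] at hlt
    exact ⟨pos_iff_ne_zero.2 hpos, (ENNReal.lt_div_iff_mul_lt (.inl hpos) (.inl hfin)).2 hlt⟩

section MaximalRearrangement

variable {μ : Measure ℝ} {g : ℝ → ℝ≥0∞} {L : ℝ≥0∞}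

lemma Ioo_subset_lt_maximalE_rearrE {a b : ℝ} (ha : 0 ≤ a) (hb : 0 ≤ b) (hL : 0 < L)
    (h : L * ENNReal.ofReal (a + b) <
      (∫⁻ x in Ioo 0 a, rearrE μ g x) + ∫⁻ x in Ioo 0 b, rearrE μ g x) :
    Ioo (-a) b ⊆ {x | L < maximalE volume (rearrE μ g) x} := fun x hx =>
  (lt_maximalE_iff hL).2 ⟨-a, b, hx, by
    rwa [Real.volume_Ioo, sub_neg_eq_add, add_comm, setLIntegral_Ioo_neg_of_even rearrE_neg ha hb]⟩

lemma ofReal_two_mul_le_volume_lt_maximalE_rearrE {r₁ r₂ : ℝ} (h₂ : 0 ≤ r₂) (h₂₁ : r₂ ≤ r₁)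
    (hL : 0 < L) (h : L * ENNReal.ofReal (r₁ + r₂) <
      (∫⁻ x in Ioo 0 r₁, rearrE μ g x) + ∫⁻ x in Ioo 0 r₂, rearrE μ g x) :
    ENNReal.ofReal (2 * r₁) ≤ volume {x | L < maximalE volume (rearrE μ g) x} := by
  have h₁ : 0 ≤ r₁ := h₂.trans h₂₁
  have hcover : Ioo (-r₁) r₁ \ {0} ⊆ Ioo (-r₁) r₂ ∪ Ioo (-r₂) r₁ := by
    rintro x ⟨hx, hx0 : x ≠ 0⟩
    rcases lt_or_gt_of_ne hx0 with hneg | hpos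
    · exact .inl ⟨hx.1, hneg.trans_le h₂⟩
    · exact .inr ⟨by linarith, hx.2⟩
  have h' : L * ENNReal.ofReal (r₂ + r₁) <
      (∫⁻ x in Ioo 0 r₂, rearrE μ g x) + ∫⁻ x in Ioo 0 r₁, rearrE μ g x := by
    rwa [add_comm r₂, add_comm (∫⁻ x in Ioo 0 r₂, _)]
  calc ENNReal.ofReal (2 * r₁) = volume (Ioo (-r₁) r₁ \ {0}) := by
        rw [measure_sdiff_null (measure_singleton 0), Real.volume_Ioo]
        ring_nf
    _ ≤ volume (Ioo (-r₁) r₂ ∪ Ioo (-r₂) r₁) := measure_mono hcover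
    _ ≤ _ := measure_mono (union_subset (Ioo_subset_lt_maximalE_rearrE h₁ h₂ hL h)
        (Ioo_subset_lt_maximalE_rearrE h₂ h₁ hL h'))

lemma measure_biUnion_Ioo_le_volume_lt_maximalE_rearrE {ι : Type*} (hg : Measurable g)
    (hL : 0 < L) {a b : ι → ℝ} (s : Finset ι)
    (hs : ∀ k ∈ s, L * μ (Ioo (a k) (b k)) < ∫⁻ y in Ioo (a k) (b k), g y ∂μ) :
    μ (⋃ k ∈ s, Ioo (a k) (b k)) ≤ volume {x | L < maximalE volume (rearrE μ g) x} := by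
  classical
  obtain ⟨t, hts, htU, ht⟩ := exists_subset_biUnion_eq_card_le_two a b s
  rw [← htU]
  rcases t.eq_empty_or_nonempty with rfl | hne
  · simp
  set T₁ := ⋃ k ∈ t, Ioo (a k) (b k)
  set T₂ := doublyCovered t fun k => Ioo (a k) (b k)
  have hT₁ : μ T₁ ≠ ⊤ := by
    refine ne_top_of_le_ne_top (ENNReal.sum_ne_top.2 fun k hk htop => ?_)
      (measure_biUnion_finset_le t _)
    simpa [htop, mul_top hL.ne'] using hs k (hts hk)
  have hT₂₁ : μ T₂ ≤ μ T₁ := measure_mono (doublyCovered_subset _ _)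
  have hT₂ : μ T₂ ≠ ⊤ := ne_top_of_le_ne_top hT₁ hT₂₁
  set r₁ := (μ T₁).toReal / 2 with hr₁
  set r₂ := (μ T₂).toReal / 2 with hr₂
  have hmain : 2 * (L * ENNReal.ofReal (r₁ + r₂)) <
      2 * ((∫⁻ x in Ioo 0 r₁, rearrE μ g x) + ∫⁻ x in Ioo 0 r₂, rearrE μ g x) :=
    calc 2 * (L * ENNReal.ofReal (r₁ + r₂)) = L * (μ T₁ + μ T₂) := by
          rw [mul_left_comm, ← ofReal_ofNat 2, ← ofReal_mul zero_le_two,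
            show 2 * (r₁ + r₂) = (μ T₁).toReal + (μ T₂).toReal by rw [hr₁, hr₂]; ring,
            ofReal_add toReal_nonneg toReal_nonneg, ofReal_toReal hT₁, ofReal_toReal hT₂]
      _ < (∫⁻ y in T₁, g y ∂μ) + ∫⁻ y in T₂, g y ∂μ :=
          mul_add_lt_of_card_le_two (fun _ => measurableSet_Ioo) ht hne hg
            fun k hk => hs k (hts hk)
      _ ≤ (∫⁻ x in Ioo (-r₁) r₁, rearrE μ g x) + ∫⁻ x in Ioo (-r₂) r₂, rearrE μ g x :=
          add_le_add (setLIntegral_le_lintegral_rearrE hg hT₁)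
            (setLIntegral_le_lintegral_rearrE hg hT₂)
      _ = _ := by
          have h₁ : 0 ≤ r₁ := by positivity
          have h₂ : 0 ≤ r₂ := by positivity
          rw [setLIntegral_Ioo_neg_of_even rearrE_neg h₁ h₁,
            setLIntegral_Ioo_neg_of_even rearrE_neg h₂ h₂]
          ring
  calc μ T₁ = ENNReal.ofReal (2 * r₁) := by
        rw [hr₁, mul_div_cancel₀ _ two_ne_zero, ofReal_toReal hT₁]
    _ ≤ _ := ofReal_two_mul_le_volume_lt_maximalE_rearrE (by positivity)
        (by rw [hr₁, hr₂]; gcongr)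
        hL ((ENNReal.mul_lt_mul_iff_right two_ne_zero ofNat_ne_top).1 hmain)

theorem measure_lt_maximalE_le_volume_lt_maximalE_rearrE (hg : Measurable g) (hL : 0 < L) :
    μ {x | L < maximalE μ g x} ≤ volume {x | L < maximalE volume (rearrE μ g) x} := by
  let Good := {p : ℝ × ℝ // L * μ (Ioo p.1 p.2) < ∫⁻ y in Ioo p.1 p.2, g y ∂μ}
  have hE : {x | L < maximalE μ g x} = ⋃ p : Good, Ioo p.1.1 p.1.2 := by
    ext x
    rw [mem_ofPred_eq, lt_maximalE_iff hL, mem_iUnion]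
    exact ⟨fun ⟨a, b, hx, h⟩ => ⟨⟨(a, b), h⟩, hx⟩, fun ⟨p, hx⟩ => ⟨p.1.1, p.1.2, hx, p.2⟩⟩
  rw [hE]
  exact measure_iUnion_le_of_forall_finset (fun _ => isOpen_Ioo) fun s =>
    measure_biUnion_Ioo_le_volume_lt_maximalE_rearrE hg hL s fun p _ => p.2

end MaximalRearrangement

theorem stmt_1_general (μ : Measure ℝ) (f : ℝ → ℝ) (hf : Measurable f) :
    ∀ l : ℝ, 0 < l →
      μ {x | ENNReal.ofReal l < maximal μ f x} ≤
        volume {x | ENNReal.ofReal l < maximalE volume (rearr μ f) x} := fun _ hl =>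
  measure_lt_maximalE_le_volume_lt_maximalE_rearrE (by fun_prop) (ofReal_pos.2 hl)

/-- `μ({M_μ f > λ}) ≤ Leb({M(f*) > λ})` for every `λ > 0`. -/
theorem stmt_1 (μ : Measure ℝ) (f : ℝ → ℝ) (hf : Measurable f)
    (hf0 : ∀ x, 0 ≤ f x)
    (hfin : ∀ t : ℝ, 0 < t → μ {x | t < f x} < ⊤) :
    ∀ l : ℝ, 0 < l →
      μ {x | ENNReal.ofReal l < maximal μ f x} ≤
        volume {x | ENNReal.ofReal l < maximalE volume (rearr μ f) x} :=
  stmt_1_general μ f hf
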